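/- If the model error is uniformly bounded, W(P^π(·|s), P̂^π(·|s)) ≤ ε for all s, then the H-step model-based value error satisfies |V̂_{P̂,H}(s) − V̂_{P,H}(s)| ≤ K·ε·γ·(1 − γ^H)/(1 − γ) for all states s. -/

import Mathlib

/-! The Bellman recursion `V̂_{Q,H+1}(s) = R(s) + γ E_{Q(s)}[V̂_{Q,H}]` splits the error
at horizon `H + 1` into a model term `E_{P̂(s)}[V̂_{P̂,H}] - E_{P(s)}[V̂_{P̂,H}]`, at most `K ε`
by Kantorovich–Rubinstein duality because `V̂_{P̂,H}` is `K`-Lipschitz, and a propagation term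
`E_{P(s)}[V̂_{P̂,H} - V̂_{P,H}]`, at most the error at horizon `H`. Unrolling bounds the error
by `K ε Σ_{t<H} γ^{t+1}`, a geometric sum. -/

open Finset

/-- `p` is a probability distribution on the finite set `S`. -/
def IsDist {S : Type*} [Fintype S] (p : S → ℝ) : Prop :=
  (∀ s, 0 ≤ p s) ∧ ∑ s, p s = 1

/-- Expectation of `f` under the distribution `p`. -/
noncomputable def expect {S : Type*} [Fintype S] (p f : S → ℝ) : ℝ := ∑ s, p s * f s

/-- `iterK P t s s'` is the `t`-step transition probability of reaching `s'` from `s`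
under the Markov kernel `P` (with `iterK P 0` the point mass). -/
noncomputable def iterK {S : Type*} [Fintype S] [DecidableEq S]
    (P : S → S → ℝ) : ℕ → S → S → ℝ
  | 0, s, s' => if s' = s then 1 else 0
  | (t+1), s, s' => ∑ u, P s u * iterK P t u s'

/-- The `H`-step model-based value:
`V̂_{Q,H}(s) = Σ_{t<H} γ^t E_{s_t∼Q_t(s)}[R(s_t)] + γ^H E_{s_H∼Q_H(s)}[V̄(s_H)]`. -/
noncomputable def mbValue {S : Type*} [Fintype S] [DecidableEq S]
    (γ : ℝ) (R Vbar : S → ℝ) (Q : S → S → ℝ) (H : ℕ) (s : S) : ℝ :=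
  ∑ t ∈ Finset.range H, γ ^ t * expect (iterK Q t s) R
    + γ ^ H * expect (iterK Q H s) Vbar

/-- The interpolant `U_h`: the `H`-step value expansion that rolls out the true kernel `P`
for the first `h` steps and the approximate kernel `Phat` for the remaining `H − h` steps. -/
noncomputable def interp {S : Type*} [Fintype S] [DecidableEq S]
    (γ : ℝ) (R Vbar : S → ℝ) (P Phat : S → S → ℝ) (H h : ℕ) (s : S) : ℝ :=
  ∑ t ∈ Finset.range h, γ ^ t * expect (iterK P t s) R
    + ∑ t ∈ Finset.Ico h H, γ ^ t * ∑ s', iterK P h s s' * expect (iterK Phat (t - h) s') R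
    + γ ^ H * ∑ s', iterK P h s s' * expect (iterK Phat (H - h) s') Vbar

/-- Wasserstein-1 distance in Kantorovich–Rubinstein dual form. -/
noncomputable def wass {S : Type*} [Fintype S] [MetricSpace S] (p q : S → ℝ) : ℝ :=
  ⨆ f : {f : S → ℝ // LipschitzWith 1 f}, (expect p f.1 - expect q f.1)

open scoped NNReal

section Expectation

variable {S : Type*} [Fintype S]

lemma expect_add (p f g : S → ℝ) :
    expect p (fun s => f s + g s) = expect p f + expect p g := by
  simp only [_root_.expect, mul_add, sum_add_distrib]

lemma expect_const_mul (p f : S → ℝ) (c : ℝ) :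
    expect p (fun s => c * f s) = c * expect p f := by
  simp only [_root_.expect, mul_sum, mul_left_comm]

lemma expect_sum {ι : Type*} (p : S → ℝ) (I : Finset ι) (f : ι → S → ℝ) :
    expect p (fun s => ∑ i ∈ I, f i s) = ∑ i ∈ I, expect p (f i) := by
  simp only [_root_.expect, mul_sum]
  exact sum_comm

lemma expect_sub (p f g : S → ℝ) : expect p (f - g) = expect p f - expect p g := by
  simp only [_root_.expect, Pi.sub_apply, mul_sub, sum_sub_distrib]

lemma expect_neg (p f : S → ℝ) : expect p (-f) = -expect p f := by
  simp only [_root_.expect, Pi.neg_apply, mul_neg, sum_neg_distrib]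

lemma expect_sub_expect (p q f : S → ℝ) :
    expect p f - expect q f = ∑ s, (p s - q s) * f s := by
  simp only [_root_.expect, sub_mul, sum_sub_distrib]

lemma abs_expect_le {p f : S → ℝ} (hp : IsDist p) {c : ℝ} (hf : ∀ s, |f s| ≤ c) :
    |expect p f| ≤ c :=
  calc |expect p f| ≤ ∑ s, |p s * f s| := abs_sum_le_sum_abs _ _
    _ ≤ ∑ s, p s * c := sum_le_sum fun s _ => by
      rw [abs_mul, abs_of_nonneg (hp.1 s)]
      exact mul_le_mul_of_nonneg_left (hf s) (hp.1 s)
    _ = c := by rw [← sum_mul, hp.2, one_mul]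

end Expectation

section Kernel

variable {S : Type*} [Fintype S] [DecidableEq S]

lemma expect_iterK_zero (Q : S → S → ℝ) (f : S → ℝ) (s : S) :
    expect (iterK Q 0 s) f = f s := by
  simp [_root_.expect, iterK]

lemma expect_iterK_succ (Q : S → S → ℝ) (f : S → ℝ) (t : ℕ) (s : S) :
    expect (iterK Q (t + 1) s) f = expect (Q s) fun u => expect (iterK Q t u) f := by
  simp only [_root_.expect, iterK, sum_mul, mul_sum, mul_assoc]
  exact sum_comm

theorem mbValue_succ (γ : ℝ) (R Vbar : S → ℝ) (Q : S → S → ℝ) (H : ℕ) (s : S) :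
    mbValue γ R Vbar Q (H + 1) s = R s + γ * expect (Q s) (mbValue γ R Vbar Q H) := by
  unfold mbValue
  simp only [expect_add, expect_sum, expect_const_mul, ← expect_iterK_succ, sum_range_succ',
    expect_iterK_zero, mul_add, mul_sum, pow_succ', mul_assoc]
  ring

end Kernel

section Wasserstein

variable {S : Type*} [Fintype S] [MetricSpace S] {p q f : S → ℝ}

lemma expect_sub_expect_le_of_lipschitzWith_one (hpq : ∑ s, p s = ∑ s, q s)
    (hf : LipschitzWith 1 f) (s₀ : S) :
    expect p f - expect q f ≤ ∑ s, |p s - q s| * dist s s₀ := by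
  have hshift : expect p f - expect q f = ∑ s, (p s - q s) * (f s - f s₀) := by
    simp only [expect_sub_expect, mul_sub, sum_sub_distrib, ← sum_mul, hpq, sub_self, zero_mul,
      sub_zero]
  rw [hshift]
  refine (le_abs_self _).trans ((abs_sum_le_sum_abs _ _).trans (sum_le_sum fun s _ => ?_))
  rw [abs_mul]
  gcongr
  simpa [Real.dist_eq] using hf.dist_le_mul s s₀

-- Equal masses are needed: otherwise adding constants to `f` makes the family unbounded and
-- `wass p q` is the junk value `0` of `⨆`.
lemma bddAbove_expect_sub_expect (hpq : ∑ s, p s = ∑ s, q s) :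
    BddAbove (Set.range fun f : {f : S → ℝ // LipschitzWith 1 f} =>
      expect p f.1 - expect q f.1) := by
  rcases isEmpty_or_nonempty S with _ | ⟨⟨s₀⟩⟩
  · exact ⟨0, by rintro _ ⟨f, rfl⟩; simp [_root_.expect]⟩
  · exact ⟨_, by
      rintro _ ⟨f, rfl⟩
      exact expect_sub_expect_le_of_lipschitzWith_one hpq f.2 s₀⟩

lemma expect_sub_expect_le_wass (hpq : ∑ s, p s = ∑ s, q s) (hf : LipschitzWith 1 f) :
    expect p f - expect q f ≤ wass p q :=
  le_ciSup (bddAbove_expect_sub_expect hpq) ⟨f, hf⟩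

lemma expect_sub_expect_le_mul_wass (hpq : ∑ s, p s = ∑ s, q s) {K : ℝ≥0}
    (hf : LipschitzWith K f) : expect p f - expect q f ≤ K * wass p q := by
  rcases eq_or_ne K 0 with rfl | hK
  · rcases isEmpty_or_nonempty S with _ | ⟨⟨s₀⟩⟩
    · simp [_root_.expect]
    have hconst : f = fun _ => f s₀ := funext fun s => (LipschitzWith.zero_iff f).1 hf s s₀
    rw [expect_sub_expect, hconst, ← sum_mul, sum_sub_distrib, hpq, sub_self, zero_mul,
      NNReal.coe_zero, zero_mul]
  · have hscaled : LipschitzWith 1 fun s => (K : ℝ)⁻¹ * f s := by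
      have h := (lipschitzWith_smul (K : ℝ)⁻¹).comp hf
      rwa [nnnorm_inv, NNReal.nnnorm_eq, inv_mul_cancel₀ hK] at h
    have h := expect_sub_expect_le_wass hpq hscaled
    rwa [expect_const_mul, expect_const_mul, ← mul_sub,
      inv_mul_le_iff₀ (NNReal.coe_pos.2 (pos_iff_ne_zero.2 hK))] at h

lemma abs_expect_sub_expect_le_mul_wass (hpq : ∑ s, p s = ∑ s, q s) {K : ℝ≥0}
    (hf : LipschitzWith K f) : |expect p f - expect q f| ≤ K * wass p q := by
  refine abs_sub_le_iff.2 ⟨expect_sub_expect_le_mul_wass hpq hf, ?_⟩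
  simpa [expect_neg, add_comm] using
    expect_sub_expect_le_mul_wass hpq (lipschitzWith_neg_iff.2 hf)

end Wasserstein

section Simulation

variable {S : Type*} [Fintype S] [DecidableEq S] [MetricSpace S] {γ : ℝ} {R Vbar : S → ℝ}
  {P Phat : S → S → ℝ} {K : ℝ≥0} {ε : ℝ}

theorem abs_mbValue_sub_le_mul_sum_pow (hγ : 0 ≤ γ) (hP : ∀ s, IsDist (P s))
    (hPhat : ∀ s, IsDist (Phat s)) (hLip : ∀ h, LipschitzWith K (mbValue γ R Vbar Phat h))
    (hW : ∀ s, wass (P s) (Phat s) ≤ ε) (H : ℕ) (s : S) :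
    |mbValue γ R Vbar Phat H s - mbValue γ R Vbar P H s| ≤
      K * ε * ∑ t ∈ range H, γ ^ (t + 1) := by
  induction H generalizing s with
  | zero => simp [mbValue, expect_iterK_zero]
  | succ H ih =>
    rw [mbValue_succ, mbValue_succ]
    set Vhat := mbValue γ R Vbar Phat H
    set V := mbValue γ R Vbar P H
    have hmodel : |expect (Phat s) Vhat - expect (P s) Vhat| ≤ K * ε := by
      rw [abs_sub_comm]
      calc _ ≤ K * wass (P s) (Phat s) :=
            abs_expect_sub_expect_le_mul_wass ((hP s).2.trans (hPhat s).2.symm) (hLip H)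
        _ ≤ K * ε := mul_le_mul_of_nonneg_left (hW s) K.2
    have hvalue : |expect (P s) (Vhat - V)| ≤ K * ε * ∑ t ∈ range H, γ ^ (t + 1) :=
      abs_expect_le (hP s) ih
    calc _ = |γ * ((expect (Phat s) Vhat - expect (P s) Vhat) + expect (P s) (Vhat - V))| := by
          rw [expect_sub]
          congr 1
          ring
      _ = γ * |(expect (Phat s) Vhat - expect (P s) Vhat) + expect (P s) (Vhat - V)| := by
          rw [abs_mul, abs_of_nonneg hγ]
      _ ≤ γ * (K * ε + K * ε * ∑ t ∈ range H, γ ^ (t + 1)) :=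
          mul_le_mul_of_nonneg_left ((abs_add_le _ _).trans (add_le_add hmodel hvalue)) hγ
      _ = K * ε * ∑ t ∈ range (H + 1), γ ^ (t + 1) := by
          simp only [sum_range_succ', mul_add, mul_sum, pow_succ, mul_assoc]
          ring_nf

end Simulation

theorem mbValue_error_le_of_uniform_model_error_general
    {S : Type*} [Fintype S] [DecidableEq S] [MetricSpace S]
    (γ : ℝ) (hγ : 0 ≤ γ ∧ γ < 1) (R Vbar : S → ℝ) (P Phat : S → S → ℝ)
    (hP : ∀ s, IsDist (P s)) (hPhat : ∀ s, IsDist (Phat s))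
    (K : ℝ) (hK : 0 ≤ K)
    (hLip : ∀ h s s', |mbValue γ R Vbar Phat h s - mbValue γ R Vbar Phat h s'| ≤ K * dist s s')
    (ε : ℝ) (hW : ∀ s, wass (P s) (Phat s) ≤ ε) (H : ℕ) (s : S) :
    |mbValue γ R Vbar Phat H s - mbValue γ R Vbar P H s| ≤
      K * ε * γ * (1 - γ ^ H) / (1 - γ) := by
  have hLipK (h : ℕ) : LipschitzWith K.toNNReal (mbValue γ R Vbar Phat h) :=
    LipschitzWith.of_dist_le_mul fun u u' => by
      rw [Real.coe_toNNReal K hK, Real.dist_eq]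
      exact hLip h u u'
  have hgeom : ∑ t ∈ range H, γ ^ (t + 1) = γ * (1 - γ ^ H) / (1 - γ) := by
    rw [eq_div_iff (sub_ne_zero.2 hγ.2.ne'), ← geom_sum_mul_neg, ← mul_assoc, mul_sum]
    simp only [pow_succ']
  calc _ ≤ K.toNNReal * ε * ∑ t ∈ range H, γ ^ (t + 1) :=
        abs_mbValue_sub_le_mul_sum_pow hγ.1 hP hPhat hLipK hW H s
    _ = _ := by rw [Real.coe_toNNReal K hK, hgeom]; ring

/-- Under a uniform model-error bound `W(P(·|s), P̂(·|s)) ≤ ε` for all `s`,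
the `H`-step model-based value error satisfies
`|V̂_{P̂,H}(s) − V̂_{P,H}(s)| ≤ K ε γ (1 − γ^H)/(1 − γ)` for all states `s`. -/
theorem mbValue_error_le_of_uniform_model_error
    {S : Type*} [Fintype S] [DecidableEq S] [MetricSpace S]
    (γ : ℝ) (hγ : 0 ≤ γ ∧ γ < 1) (R Vbar : S → ℝ) (P Phat : S → S → ℝ)
    (hP : ∀ s, IsDist (P s)) (hPhat : ∀ s, IsDist (Phat s))
    (K : ℝ) (hK : 0 ≤ K)
    (hLip : ∀ h s s', |mbValue γ R Vbar Phat h s - mbValue γ R Vbar Phat h s'| ≤ K * dist s s')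
    (ε : ℝ) (hε : 0 ≤ ε) (hW : ∀ s, wass (P s) (Phat s) ≤ ε) (H : ℕ) (s : S) :
    |mbValue γ R Vbar Phat H s - mbValue γ R Vbar P H s| ≤
      K * ε * γ * (1 - γ ^ H) / (1 - γ) :=
  mbValue_error_le_of_uniform_model_error_general γ hγ R Vbar P Phat hP hPhat K hK hLip ε hW H s
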